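/- Let s ∈ (0,1/2) and set ρ = s/(1−s). Let f : (0,1) → ℝ be non-increasing and right continuous, and let M be a real number such that J(f,(a,b),s) ≤ M for every pair of real numbers a, b with 0 ≤ a < b ≤ 1. Then f(ρt) − f(t) ≤ 2M for every t ∈ (0,1/2]. -/
import Mathlib


open MeasureTheory Set

/-- The John–Strömberg functional
`J(f,E,s) = inf_{c ∈ ℝ} inf {α ≥ 0 : μ({x ∈ E : |f(x) − c| > α}) < s·μ(E)}`. -/
noncomputable def JS {X : Type*} [MeasurableSpace X] (μ : Measure X)
    (f : X → ℝ) (E : Set X) (s : ℝ) : ℝ :=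
  sInf {α : ℝ | 0 ≤ α ∧ ∃ c : ℝ, μ {x ∈ E | α < |f x - c|} < ENNReal.ofReal s * μ E}

theorem stmt13 (s : ℝ) (hs : s ∈ Set.Ioo (0:ℝ) (1/2))
    (f : ℝ → ℝ) (hmono : AntitoneOn f (Set.Ioo 0 1))
    (hrc : ∀ t ∈ Set.Ioo (0:ℝ) 1, ContinuousWithinAt f (Set.Ioo t 1) t)
    (M : ℝ) (hM : ∀ a b : ℝ, 0 ≤ a → a < b → b ≤ 1 → JS volume f (Set.Ioo a b) s ≤ M) :
    ∀ t ∈ Set.Ioc (0:ℝ) (1/2), f (s / (1 - s) * t) - f t ≤ 2 * M := by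
  obtain ⟨hs0, hs12⟩ := hs
  intro t ht
  obtain ⟨ht0, ht2⟩ := ht
  have h1s : (0:ℝ) < 1 - s := by linarith
  set ρ : ℝ := s / (1 - s) with hρ
  have hρ0 : 0 < ρ := div_pos hs0 h1s
  have hρ1 : ρ < 1 := by rw [div_lt_one h1s]; linarith
  set b : ℝ := t / (1 - s) with hb
  have hb0 : 0 < b := div_pos ht0 h1s
  have htb : t < b := by
    rw [hb, lt_div_iff₀ h1s]; nlinarith
  have hb1 : b < 1 := by
    rw [hb, div_lt_one h1s]; linarith
  have hsb : s * b = ρ * t := by rw [hρ, hb]; ring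
  have hbt : b - t = ρ * t := by rw [hρ, hb]; field_simp; ring
  have hρtb : ρ * t < b := by nlinarith
  have hρt0 : 0 < ρ * t := mul_pos hρ0 ht0
  have hρt1 : ρ * t < 1 := by nlinarith
  -- the set in the definition of JS
  set S : Set ℝ := {α : ℝ | 0 ≤ α ∧ ∃ c : ℝ,
    volume {x ∈ Ioo 0 b | α < |f x - c|} < ENNReal.ofReal s * volume (Ioo 0 b)} with hS
  have hJS : sInf S ≤ M := hM 0 b le_rfl hb0 hb1.le
  -- S is nonempty
  have hne : S.Nonempty := by
    set δ : ℝ := s * b / 4 with hδ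
    have hδ0 : 0 < δ := by positivity
    have hδb : δ < b / 2 := by nlinarith
    refine ⟨|f δ| ⊔ |f (b - δ)|, le_trans (abs_nonneg _) le_sup_left, 0, ?_⟩
    have hsub : {x ∈ Ioo 0 b | |f δ| ⊔ |f (b - δ)| < |f x - 0|} ⊆
        Ioo (0:ℝ) δ ∪ Ioo (b - δ) b := by
      intro x ⟨hx, hfx⟩
      by_contra hcon
      rw [mem_union, not_or] at hcon
      obtain ⟨hc1, hc2⟩ := hcon
      simp only [mem_Ioo, not_and, not_lt] at hc1 hc2
      have hcon : _ ∧ _ := ⟨hc1, hc2⟩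
      have hxδ : δ ≤ x := hcon.1 hx.1
      have hxbδ : x ≤ b - δ := by
        by_contra h'
        push_neg at h'
        exact absurd (hcon.2 h') (not_le.mpr hx.2)
      have hδmem : δ ∈ Ioo (0:ℝ) 1 := ⟨hδ0, by linarith⟩
      have hbδmem : b - δ ∈ Ioo (0:ℝ) 1 := ⟨by linarith, by linarith⟩
      have hxmem : x ∈ Ioo (0:ℝ) 1 := ⟨hx.1, by linarith [hx.2]⟩
      have h1 : f x ≤ f δ := hmono hδmem hxmem hxδ
      have h2 : f (b - δ) ≤ f x := hmono hxmem hbδmem hxbδ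
      have : |f x - 0| ≤ |f δ| ⊔ |f (b - δ)| := by
        rw [sub_zero, abs_le]
        constructor
        · calc -(|f δ| ⊔ |f (b - δ)|) ≤ -|f (b - δ)| := by
                exact neg_le_neg le_sup_right
            _ ≤ f (b - δ) := neg_abs_le _
            _ ≤ f x := h2
        · exact h1.trans ((le_abs_self _).trans le_sup_left)
      exact absurd hfx (not_lt.mpr this)
    calc volume {x ∈ Ioo 0 b | |f δ| ⊔ |f (b - δ)| < |f x - 0|}
        ≤ volume (Ioo (0:ℝ) δ ∪ Ioo (b - δ) b) := measure_mono hsub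
      _ ≤ volume (Ioo (0:ℝ) δ) + volume (Ioo (b - δ) b) := measure_union_le _ _
      _ = ENNReal.ofReal δ + ENNReal.ofReal δ := by
          rw [Real.volume_Ioo, Real.volume_Ioo]; ring_nf
      _ = ENNReal.ofReal (2 * δ) := by
          rw [← ENNReal.ofReal_add hδ0.le hδ0.le]; ring_nf
      _ < ENNReal.ofReal (s * b) := by
          apply ENNReal.ofReal_lt_ofReal_iff_of_nonneg (by positivity) |>.mpr
          nlinarith
      _ = ENNReal.ofReal s * volume (Ioo 0 b) := by
          rw [Real.volume_Ioo, sub_zero, ENNReal.ofReal_mul hs0.le]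
  -- extract a good α and c
  have key : ∀ ε > (0:ℝ), f (ρ * t) - f t ≤ 2 * M + ε := by
    intro ε hε
    obtain ⟨α, ⟨hα0, c, hc⟩, hαM⟩ :=
      exists_lt_of_csInf_lt hne (lt_of_le_of_lt hJS (by linarith : M < M + ε / 2))
    -- Claim A : f (ρ*t) ≤ c + α
    have hA : f (ρ * t) ≤ c + α := by
      by_contra h
      push_neg at h
      have hsub : Ioc 0 (ρ * t) ⊆ {x ∈ Ioo 0 b | α < |f x - c|} := by
        intro x ⟨hx0, hxρt⟩
        refine ⟨⟨hx0, lt_of_le_of_lt hxρt hρtb⟩, ?_⟩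
        have hxmem : x ∈ Ioo (0:ℝ) 1 := ⟨hx0, lt_of_le_of_lt hxρt hρt1⟩
        have : f (ρ * t) ≤ f x := hmono hxmem ⟨hρt0, hρt1⟩ hxρt
        calc α < f (ρ * t) - c := by linarith
          _ ≤ f x - c := by linarith
          _ ≤ |f x - c| := le_abs_self _
      have h1 : ENNReal.ofReal (ρ * t) ≤ volume {x ∈ Ioo 0 b | α < |f x - c|} := by
        calc ENNReal.ofReal (ρ * t) = volume (Ioc 0 (ρ * t)) := by
              rw [Real.volume_Ioc, sub_zero]
          _ ≤ _ := measure_mono hsub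
      have h2 : ENNReal.ofReal s * volume (Ioo 0 b) = ENNReal.ofReal (ρ * t) := by
        rw [Real.volume_Ioo, sub_zero, ← ENNReal.ofReal_mul hs0.le, hsb]
      rw [h2] at hc
      exact absurd (lt_of_le_of_lt h1 hc) (lt_irrefl _)
    -- Claim B : c - α ≤ f t
    have hB : c - α ≤ f t := by
      by_contra h
      push_neg at h
      have hsub : Ico t b ⊆ {x ∈ Ioo 0 b | α < |f x - c|} := by
        intro x ⟨hxt, hxb⟩
        refine ⟨⟨lt_of_lt_of_le ht0 hxt, hxb⟩, ?_⟩
        have hxmem : x ∈ Ioo (0:ℝ) 1 := ⟨lt_of_lt_of_le ht0 hxt, lt_trans hxb hb1⟩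
        have htmem : t ∈ Ioo (0:ℝ) 1 := ⟨ht0, by linarith⟩
        have : f x ≤ f t := hmono htmem hxmem hxt
        calc α < c - f t := by linarith
          _ ≤ c - f x := by linarith
          _ ≤ |c - f x| := le_abs_self _
          _ = |f x - c| := abs_sub_comm _ _
      have h1 : ENNReal.ofReal (ρ * t) ≤ volume {x ∈ Ioo 0 b | α < |f x - c|} := by
        calc ENNReal.ofReal (ρ * t) = volume (Ico t b) := by
              rw [Real.volume_Ico, hbt]
          _ ≤ _ := measure_mono hsub
      have h2 : ENNReal.ofReal s * volume (Ioo 0 b) = ENNReal.ofReal (ρ * t) := by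
        rw [Real.volume_Ioo, sub_zero, ← ENNReal.ofReal_mul hs0.le, hsb]
      rw [h2] at hc
      exact absurd (lt_of_le_of_lt h1 hc) (lt_irrefl _)
    linarith
  linarith [le_of_forall_pos_le_add key]
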